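/- Let X be a finite topological T₀-space and let A ⊆ X be an antichain of potential down beat points of X such that U_a ∩ U_b = ∅ for all a, b ∈ A with a ≠ b. Then the number of distinct semiflows on X satisfies S_F(X) ≥ 2^{|A|}. -/

import Mathlib

/-!
A map `r : X → X` that is monotone and idempotent for the specialization order and lies below
the identity (`r x ⤳ x`) is continuous on a finite space, and `φ 0 = id`, `φ t = r` for `t > 0`
is then a semiflow. Deleting the points of a potential down beat sequence of `a` one at a time,
each onto the greatest element below it, produces such an `r` with `r a ≠ a`. For `S ⊆ A` these
maps can be glued along the disjoint open sets `U_a`, `a ∈ S`; as `A` is an antichain, the glued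
map moves exactly the points of `S` among those of `A`, so distinct `S` give distinct semiflows.
The bound also needs finiteness of the set of semiflows, as `Nat.card` of an infinite type is
`0`: on a finite T₀ space a semiflow is constant in positive time, because continuity at `0`
makes `φ u ≤ id` for small `u`, and a maximal such `φ u₀` is then constant on `(0, u₀]`, hence
idempotent.
-/

open NNReal

/-- A semiflow on a topological space `X`: a jointly continuous map
`φ : ℝ≥0 × X → X` with `φ 0 x = x` and `φ s (φ t x) = φ (s + t) x`. -/
def IsSemiflow {X : Type*} [TopologicalSpace X] (φ : ℝ≥0 → X → X) : Prop :=
  Continuous (fun p : ℝ≥0 × X => φ p.1 p.2) ∧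
  (∀ x : X, φ 0 x = x) ∧
  ∀ (s t : ℝ≥0) (x : X), φ s (φ t x) = φ (s + t) x

/-- A semiflow is trivial if every time-`t` map is the identity. -/
def IsTrivialSemiflow {X : Type*} [TopologicalSpace X] (φ : ℝ≥0 → X → X) : Prop :=
  ∀ (t : ℝ≥0) (x : X), φ t x = x

/-- `x` is a down beat point: `U_x \ {x}` has a greatest element in the
specialization order (`y ⤳ x` means `y ≤ x`, i.e. `y ∈ U_x`). -/
def IsDownBeatPoint {X : Type*} [TopologicalSpace X] (x : X) : Prop :=
  ∃ m : X, (m ⤳ x ∧ m ≠ x) ∧ ∀ y : X, y ⤳ x → y ≠ x → y ⤳ m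

/-- `x` is an up beat point: `F_x \ {x}` has a least element in the
specialization order. -/
def IsUpBeatPoint {X : Type*} [TopologicalSpace X] (x : X) : Prop :=
  ∃ m : X, (x ⤳ m ∧ m ≠ x) ∧ ∀ y : X, x ⤳ y → y ≠ x → m ⤳ y

/-- The height of `x` in the specialization order: the supremum of lengths `n`
of strict chains `c 0 < c 1 < ⋯ < c n = x`. -/
noncomputable def specHeight {X : Type*} [TopologicalSpace X] (x : X) : ℕ :=
  sSup {n : ℕ | ∃ c : Fin (n + 1) → X, c (Fin.last n) = x ∧
    ∀ i j : Fin (n + 1), i < j → c i ⤳ c j ∧ c i ≠ c j}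

/-- `y` is a potential down beat point: there is a sequence of distinct points
`x 0, …, x n` ending at `y` such that `x 0` is a down beat point of `X`, each
`x (i+1)` is a down beat point of the subspace `X \ {x 0, …, x i}`, and the
heights satisfy `ht (x i) ≤ ht (x j) ↔ i ≤ j`. -/
def IsPotentialDownBeatPoint {X : Type*} [TopologicalSpace X] (y : X) : Prop :=
  ∃ (n : ℕ) (x : Fin (n + 1) → X),
    Function.Injective x ∧
    x (Fin.last n) = y ∧
    IsDownBeatPoint (x 0) ∧
    (∀ (i : Fin n) (h : x i.succ ∈ {z : X | ∀ j : Fin (n + 1), j ≤ i.castSucc → z ≠ x j}),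
      IsDownBeatPoint (X := ↥{z : X | ∀ j : Fin (n + 1), j ≤ i.castSucc → z ≠ x j})
        ⟨x i.succ, h⟩) ∧
    ∀ i j : Fin (n + 1), (specHeight (x i) ≤ specHeight (x j) ↔ i ≤ j)

open Topology

section Specialization

variable {X : Type*} [TopologicalSpace X]

lemma isOpen_setOf_specializes [AlexandrovDiscrete X] (x : X) : IsOpen {z | z ⤳ x} :=
  isOpen_iff_forall_specializes.2 fun _ _ hzw hw => hzw.trans hw

lemma continuous_of_specializes_map [AlexandrovDiscrete X] {f : X → X}
    (hf : ∀ ⦃z w : X⦄, z ⤳ w → f z ⤳ f w) : Continuous f :=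
  continuous_def.2 fun _ hV =>
    isOpen_iff_forall_specializes.2 fun _ _ hzw hw => (hf hzw).mem_open hV hw

structure IsKernelOperator (r : X → X) : Prop where
  specializes_map : ∀ ⦃z w : X⦄, z ⤳ w → r z ⤳ r w
  map_specializes : ∀ z, r z ⤳ z
  idem : ∀ z, r (r z) = r z

structure IsDownRetraction (r : X → X) (B : Set X) : Prop where
  specializes_map : ∀ ⦃z w : X⦄, z ⤳ w → r z ⤳ r w
  map_specializes : ∀ z, r z ⤳ z
  mem : ∀ z, r z ∈ B
  eq_self : ∀ z ∈ B, r z = z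

lemma IsDownRetraction.isKernelOperator {r : X → X} {B : Set X} (h : IsDownRetraction r B) :
    IsKernelOperator r :=
  ⟨h.specializes_map, h.map_specializes, fun z => h.eq_self _ (h.mem z)⟩

lemma isDownRetraction_id : IsDownRetraction (id : X → X) Set.univ :=
  ⟨fun _ _ h => h, specializes_refl, Set.mem_univ, fun _ _ => rfl⟩

lemma IsDownRetraction.update_comp [DecidableEq X] {r : X → X} {B : Set X}
    (h : IsDownRetraction r B) {x m : X} (hmB : m ∈ B) (hmx : m ⤳ x) (hne : m ≠ x)
    (hmax : ∀ y ∈ B, y ⤳ x → y ≠ x → y ⤳ m) :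
    IsDownRetraction (Function.update id x m ∘ r) (B \ {x}) := by
  have hcollapse : ∀ y, Function.update id x m y ⤳ y := by
    intro y
    by_cases hy : y = x
    · rw [hy, Function.update_self]; exact hmx
    · rw [Function.update_of_ne hy]; rfl
  refine ⟨fun z w hzw => ?_, fun z => (hcollapse _).trans (h.map_specializes z), fun z => ?_,
    fun z hz => ?_⟩
  · have hrzw := h.specializes_map hzw
    by_cases hw : r w = x
    · by_cases hz : r z = x
      · simp only [Function.comp, hz, hw, Function.update_self, specializes_refl]
      · simpa [Function.comp, hz, hw] using hmax _ (h.mem z) (hw ▸ hrzw) hz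
    · simpa [Function.comp, hw] using (hcollapse (r z)).trans hrzw
  · by_cases hz : r z = x
    · simpa [hz] using ⟨hmB, hne⟩
    · simpa [hz] using h.mem z
  · rw [Function.comp_apply, h.eq_self z hz.1, Function.update_of_ne hz.2, id]

lemma IsDownBeatPoint.exists_max_of_subtype {B : Set X} {x : B} (hx : IsDownBeatPoint x) :
    ∃ m ∈ B, (m ⤳ x.1 ∧ m ≠ x.1) ∧ ∀ y ∈ B, y ⤳ x.1 → y ≠ x.1 → y ⤳ m := by
  obtain ⟨m, ⟨hmx, hne⟩, hmax⟩ := hx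
  refine ⟨m, m.2, ⟨(subtype_specializes_iff _ _).1 hmx, fun h => hne (Subtype.ext h)⟩,
    fun y hy hyx hne' => ?_⟩
  exact (subtype_specializes_iff ⟨y, hy⟩ m).1
    (hmax ⟨y, hy⟩ ((subtype_specializes_iff _ _).2 hyx) fun h => hne' (congrArg Subtype.val h))

lemma IsPotentialDownBeatPoint.exists_isKernelOperator_ne {y : X}
    (hy : IsPotentialDownBeatPoint y) : ∃ r : X → X, IsKernelOperator r ∧ r y ≠ y := by
  classical
  obtain ⟨n, x, hinj, rfl, hx₀, hsucc, -⟩ := hy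
  have hretract : ∀ i : Fin (n + 1), ∃ r : X → X,
      IsDownRetraction r {z | ∀ j : Fin (n + 1), j ≤ i → z ≠ x j} := by
    intro i
    induction i using Fin.induction with
    | zero =>
      obtain ⟨m, ⟨hmx, hne⟩, hmax⟩ := hx₀
      have hB : {z | ∀ j : Fin (n + 1), j ≤ 0 → z ≠ x j} = Set.univ \ {x 0} := by
        ext z; simp
      exact ⟨_, hB ▸ isDownRetraction_id.update_comp (Set.mem_univ m) hmx hne
        fun y _ => hmax y⟩
    | succ i ih =>
      obtain ⟨r, hr⟩ := ih
      have hmem : x i.succ ∈ {z | ∀ j : Fin (n + 1), j ≤ i.castSucc → z ≠ x j} :=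
        fun j hj h => (Fin.le_castSucc_iff.1 hj).ne' (hinj h)
      obtain ⟨m, hmB, ⟨hmx, hne⟩, hmax⟩ := (hsucc i hmem).exists_max_of_subtype
      have hB : {z | ∀ j : Fin (n + 1), j ≤ i.succ → z ≠ x j} =
          {z | ∀ j : Fin (n + 1), j ≤ i.castSucc → z ≠ x j} \ {x i.succ} := by
        ext z
        refine ⟨fun h => ⟨fun j hj => h j (hj.trans (Fin.castSucc_le_succ i)), h _ le_rfl⟩, ?_⟩
        rintro ⟨h, hne⟩ j hj
        rcases hj.lt_or_eq with hj | rfl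
        exacts [h j (Fin.le_castSucc_iff.2 hj), hne]
      exact ⟨_, hB ▸ hr.update_comp hmB hmx hne hmax⟩
  obtain ⟨r, hr⟩ := hretract (Fin.last n)
  exact ⟨r, hr.isKernelOperator, hr.mem _ _ le_rfl⟩

end Specialization

section Glue

variable {X ι : Type*}

open scoped Classical in
noncomputable def glueOn (s : Set ι) (U : ι → Set X) (g : ι → X → X) (z : X) : X :=
  if h : ∃ i ∈ s, z ∈ U i then g h.choose z else z

variable {s : Set ι} {U : ι → Set X} {g : ι → X → X}

lemma glueOn_eq (hdisj : s.PairwiseDisjoint U) {i : ι} (hi : i ∈ s) {z : X} (hz : z ∈ U i) :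
    glueOn s U g z = g i z := by
  have h : ∃ j ∈ s, z ∈ U j := ⟨i, hi, hz⟩
  rw [glueOn, dif_pos h, hdisj.elim_set h.choose_spec.1 hi z h.choose_spec.2 hz]

lemma glueOn_eq_self {z : X} (hz : ∀ i ∈ s, z ∉ U i) : glueOn s U g z = z := by
  rw [glueOn, dif_neg fun ⟨i, hi, hzi⟩ => hz i hi hzi]

variable [TopologicalSpace X]

lemma isKernelOperator_glueOn (hdisj : s.PairwiseDisjoint U) (hU : ∀ i ∈ s, IsOpen (U i))
    (hg : ∀ i ∈ s, IsKernelOperator (g i)) : IsKernelOperator (glueOn s U g) := by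
  have hle : ∀ z, glueOn s U g z ⤳ z := by
    intro z
    by_cases hz : ∃ i ∈ s, z ∈ U i
    · obtain ⟨i, hi, hzi⟩ := hz
      rw [glueOn_eq hdisj hi hzi]
      exact (hg i hi).map_specializes z
    · rw [glueOn_eq_self fun i hi hzi => hz ⟨i, hi, hzi⟩]
  refine ⟨fun z w hzw => ?_, hle, fun z => ?_⟩
  · by_cases hw : ∃ i ∈ s, w ∈ U i
    · obtain ⟨i, hi, hwi⟩ := hw
      rw [glueOn_eq hdisj hi hwi, glueOn_eq hdisj hi (hzw.mem_open (hU i hi) hwi)]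
      exact (hg i hi).specializes_map hzw
    · rw [glueOn_eq_self fun i hi hwi => hw ⟨i, hi, hwi⟩]
      exact (hle z).trans hzw
  · by_cases hz : ∃ i ∈ s, z ∈ U i
    · obtain ⟨i, hi, hzi⟩ := hz
      have hgz : g i z ∈ U i := ((hg i hi).map_specializes z).mem_open (hU i hi) hzi
      rw [glueOn_eq hdisj hi hzi, glueOn_eq hdisj hi hgz, (hg i hi).idem]
    · have hfix := glueOn_eq_self (g := g) fun i hi hzi => hz ⟨i, hi, hzi⟩
      rw [hfix, hfix]

end Glue

section JumpFlow

variable {X : Type*}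

noncomputable def jumpFlow (r : X → X) (t : ℝ≥0) : X → X :=
  if t = 0 then id else r

lemma jumpFlow_injective : Function.Injective (jumpFlow : (X → X) → ℝ≥0 → X → X) :=
  fun r r' h => by simpa [jumpFlow] using congrFun h 1

variable [TopologicalSpace X]

lemma isSemiflow_jumpFlow {r : X → X} (hr : Continuous r) (hle : ∀ z, r z ⤳ z)
    (hidem : ∀ z, r (r z) = r z) : IsSemiflow (jumpFlow r) := by
  refine ⟨continuous_def.2 fun V hV => ?_, fun z => by simp [jumpFlow], fun s t z => ?_⟩
  · have hpre : (fun p : ℝ≥0 × X => jumpFlow r p.1 p.2) ⁻¹' V =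
        Set.univ ×ˢ V ∪ Set.Ioi 0 ×ˢ (r ⁻¹' V) := by
      ext ⟨t, z⟩
      rcases eq_or_ne t 0 with rfl | ht
      · simp [jumpFlow]
      · simp only [jumpFlow, if_neg ht, Set.mem_preimage, Set.mem_union, Set.mem_prod,
          Set.mem_univ, true_and, Set.mem_Ioi, pos_iff_ne_zero.2 ht]
        exact ⟨Or.inr, fun h => h.elim ((hle z).mem_open hV) id⟩
    rw [hpre]
    exact (isOpen_univ.prod hV).union (isOpen_Ioi.prod (hV.preimage hr))
  · rcases eq_or_ne t 0 with rfl | ht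
    · simp [jumpFlow]
    rcases eq_or_ne s 0 with rfl | hs
    · simp [jumpFlow]
    simp [jumpFlow, ht, hs, hidem]

lemma IsKernelOperator.isSemiflow_jumpFlow [AlexandrovDiscrete X] {r : X → X}
    (hr : IsKernelOperator r) : IsSemiflow (jumpFlow r) :=
  _root_.isSemiflow_jumpFlow (continuous_of_specializes_map hr.specializes_map)
    hr.map_specializes hr.idem

end JumpFlow

namespace IsSemiflow

variable {X : Type*} [TopologicalSpace X] {φ : ℝ≥0 → X → X}

lemma continuous_apply (hφ : IsSemiflow φ) (t : ℝ≥0) : Continuous (φ t) :=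
  hφ.1.comp (continuous_const.prodMk continuous_id)

lemma exists_pos_forall_lt_specializes [Finite X] (hφ : IsSemiflow φ) :
    ∃ ε > 0, ∀ u < ε, ∀ z, φ u z ⤳ z := by
  have hev : ∀ᶠ u in 𝓝 (0 : ℝ≥0), ∀ z, φ u z ⤳ z := by
    refine Filter.eventually_all.2 fun z => ?_
    have hcont : Continuous fun u => φ u z := hφ.1.comp (continuous_id.prodMk continuous_const)
    have hU : {w | w ⤳ z} ∈ 𝓝 (φ 0 z) := by
      rw [hφ.2.1 z]
      exact (isOpen_setOf_specializes z).mem_nhds specializes_rfl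
    exact hcont.continuousAt.eventually_mem hU
  obtain ⟨ε, hε, hsub⟩ := NNReal.nhds_zero_basis.mem_iff.1 hev
  exact ⟨ε, hε, fun u hu => hsub hu⟩

lemma forall_pos_eq_of_forall_le_eq (hφ : IsSemiflow φ) {u₀ : ℝ≥0} (hu₀ : 0 < u₀)
    (hconst : ∀ u, 0 < u → u ≤ u₀ → φ u = φ u₀) : ∀ t, 0 < t → φ t = φ u₀ := by
  have hidem : ∀ z, φ u₀ (φ u₀ z) = φ u₀ z := by
    intro z
    have hhalf := hconst (u₀ / 2) (half_pos hu₀) (NNReal.half_le_self _)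
    calc φ u₀ (φ u₀ z) = φ (u₀ / 2) (φ (u₀ / 2) z) := by rw [hhalf]
      _ = φ u₀ z := by rw [hφ.2.2, add_halves]
  have hmul : ∀ n : ℕ, ∀ t, 0 < t → t ≤ n * u₀ → φ t = φ u₀ := by
    intro n
    induction n with
    | zero => intro t ht htn; exact absurd (by simpa using htn) ht.ne'
    | succ n ih =>
      intro t ht htn
      rcases le_or_gt t u₀ with htu₀ | hu₀t
      · exact hconst t ht htu₀
      have hrest : φ (t - u₀) = φ u₀ :=
        ih _ (tsub_pos_of_lt hu₀t) (by rw [tsub_le_iff_right]; push_cast at htn; linarith)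
      funext z
      rw [← tsub_add_cancel_of_le hu₀t.le, ← hφ.2.2, hrest, hidem]
  intro t ht
  obtain ⟨n, hn⟩ := exists_nat_ge (t / u₀)
  exact hmul n t ht ((div_le_iff₀ hu₀).1 hn)

lemma exists_forall_pos_eq [Finite X] [T0Space X] (hφ : IsSemiflow φ) :
    ∃ r : X → X, ∀ t, 0 < t → φ t = r := by
  obtain ⟨ε, hε, hsmall⟩ := hφ.exists_pos_forall_lt_specializes
  have : Finite (Specialization X) := inferInstanceAs (Finite X)
  -- In `Specialization X`, `a ≤ b` means `b ⤳ a`: `φ u₀` is maximal for `⤳` among small times.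
  obtain ⟨u₀, ⟨hu₀, hu₀ε⟩, hmax⟩ := Set.Finite.exists_minimalFor'
    (fun u => Specialization.toEquiv ∘ φ u) (Set.Ioo 0 ε) (Set.toFinite _)
    ⟨ε / 2, half_pos hε, half_lt_self hε.ne'⟩
  refine ⟨φ u₀, hφ.forall_pos_eq_of_forall_le_eq hu₀ fun u hu huu₀ => ?_⟩
  have hle : ∀ z, φ u₀ z ⤳ φ u z := by
    intro z
    rw [← add_tsub_cancel_of_le huu₀, ← hφ.2.2]
    exact (hsmall _ (tsub_le_self.trans_lt hu₀ε) z).map (hφ.continuous_apply u)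
  have hge : ∀ z, φ u z ⤳ φ u₀ z := hmax ⟨hu, huu₀.trans_lt hu₀ε⟩ hle
  exact funext fun z => ((hge z).antisymm (hle z)).eq

end IsSemiflow

instance finite_semiflows {X : Type*} [TopologicalSpace X] [Finite X] [T0Space X] :
    Finite {φ : ℝ≥0 → X → X // IsSemiflow φ} := by
  refine Finite.of_injective (fun φ => φ.1 1) fun φ ψ h => Subtype.ext (funext fun t => ?_)
  rcases eq_or_ne t 0 with rfl | ht
  · exact funext fun z => (φ.2.2.1 z).trans (ψ.2.2.1 z).symm
  obtain ⟨r, hr⟩ := φ.2.exists_forall_pos_eq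
  obtain ⟨r', hr'⟩ := ψ.2.exists_forall_pos_eq
  have h1 := pos_iff_ne_zero.2 ht
  simp only at h
  rw [hr t h1, hr' t h1, ← hr 1 one_pos, ← hr' 1 one_pos, h]

/-- If `A` is an antichain of potential down beat points with pairwise
disjoint minimal open sets, then `S_F(X) ≥ 2 ^ |A|`. -/
theorem card_semiflows_ge_pow_antichain {X : Type*} [TopologicalSpace X] [Finite X]
    [T0Space X] (A : Set X) (hA : IsAntichain (· ⤳ ·) A)
    (hpot : ∀ a ∈ A, IsPotentialDownBeatPoint a)
    (hdisj : ∀ a ∈ A, ∀ b ∈ A, a ≠ b → {z : X | z ⤳ a} ∩ {z : X | z ⤳ b} = ∅) :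
    2 ^ A.ncard ≤ Nat.card {φ : ℝ≥0 → X → X // IsSemiflow φ} := by
  choose g hg hga using fun a : A => (hpot a a.2).exists_isKernelOperator_ne
  let U : A → Set X := fun a => {z | z ⤳ a}
  have hUdisj (S : Set A) : S.PairwiseDisjoint U := fun a _ b _ hab =>
    Set.disjoint_iff_inter_eq_empty.2 (hdisj a a.2 b b.2 (Subtype.coe_ne_coe.2 hab))
  have hF (S : Set A) : IsKernelOperator (glueOn S U g) :=
    isKernelOperator_glueOn (hUdisj S) (fun a _ => isOpen_setOf_specializes a.1) fun a _ => hg a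
  have hFa (S : Set A) (a : A) : glueOn S U g a = a ↔ a ∉ S := by
    refine ⟨fun h haS => hga a ((glueOn_eq (hUdisj S) haS specializes_rfl).symm.trans h),
      fun haS => glueOn_eq_self fun b hbS hab => ?_⟩
    exact hA a.2 b.2 (Subtype.coe_ne_coe.2 fun h => haS (h ▸ hbS)) hab
  let Φ (S : Set A) : {φ : ℝ≥0 → X → X // IsSemiflow φ} :=
    ⟨jumpFlow (glueOn S U g), (hF S).isSemiflow_jumpFlow⟩
  have hΦ : Function.Injective Φ := by
    intro S T hST
    have h1 : glueOn S U g = glueOn T U g := jumpFlow_injective (congrArg Subtype.val hST)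
    ext a
    rw [← not_iff_not, ← hFa, ← hFa, h1]
  have := Fintype.ofFinite A
  calc 2 ^ A.ncard = Nat.card (Set A) := by
        rw [← Nat.card_coe_set_eq, Nat.card_eq_fintype_card, ← Fintype.card_set,
          Nat.card_eq_fintype_card]
    _ ≤ _ := Nat.card_le_card_of_injective Φ hΦ
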